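/- arXiv:2502.07021 — 2 statements merged into one kernel-verified Lean document; each statement's English description precedes it below -/
import Mathlib

section
/- If P = diag(u) K diag(v) for strictly positive vectors u, v and the Gibbs kernel K = exp(−C/ε), and P satisfies the marginal constraints P𝟙 = a and Pᵀ𝟙 = b, then P is the unique minimizer of the entropy-regularized optimal transport problem over U(a,b) ∩ (0,∞)^{n×n}. -/
lemma sinkhorn_key_nonneg {p q : ℝ} (hp : 0 < p) (hq : 0 < q) :
    0 ≤ q * (Real.log q - Real.log p) - q + p := by
  have h := Real.log_le_sub_one_of_pos (show (0:ℝ) < p / q by positivity)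
  have hlog : Real.log (p / q) = Real.log p - Real.log q := Real.log_div hp.ne' hq.ne'
  rw [hlog] at h
  have h2 : q * (Real.log p - Real.log q) ≤ q * (p / q - 1) :=
    mul_le_mul_of_nonneg_left h hq.le
  have h3 : q * (p / q - 1) = p - q := by field_simp
  nlinarith

lemma sinkhorn_key_eq {p q : ℝ} (hp : 0 < p) (hq : 0 < q)
    (h : q * (Real.log q - Real.log p) - q + p = 0) : q = p := by
  by_contra hne
  have hpq : p / q ≠ 1 := by
    intro h1
    exact hne ((div_eq_one_iff_eq hq.ne').mp h1).symm
  have hlt := Real.log_lt_sub_one_of_pos (show (0:ℝ) < p / q by positivity) hpq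
  have hlog : Real.log (p / q) = Real.log p - Real.log q := Real.log_div hp.ne' hq.ne'
  rw [hlog] at hlt
  have h2 : q * (Real.log p - Real.log q) < q * (p / q - 1) :=
    mul_lt_mul_of_pos_left hlt hq
  have h3 : q * (p / q - 1) = p - q := by field_simp
  nlinarith

/-- A diagonal scaling `P = diag(u) K diag(v)` of the Gibbs kernel `K = exp(-C/ε)`
that satisfies both marginal constraints is the unique minimizer of the entropic OT
objective over the strictly positive part of the transport polytope `U(a,b)`. -/
theorem sinkhorn_scaling_is_unique_minimizer
    (n : ℕ) (C : Matrix (Fin n) (Fin n) ℝ) (ε : ℝ) (hε : 0 < ε)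
    (K : Matrix (Fin n) (Fin n) ℝ) (hK : ∀ i j, K i j = Real.exp (-(C i j) / ε))
    (a b : Fin n → ℝ) (ha : ∀ i, 0 < a i) (hb : ∀ i, 0 < b i)
    (hmass : ∑ i, a i = ∑ i, b i)
    (f : Matrix (Fin n) (Fin n) ℝ → ℝ)
    (hf : ∀ P, f P = (∑ i, ∑ j, P i j * C i j)
        + ε * ∑ i, ∑ j, P i j * (Real.log (P i j) - 1))
    (u v : Fin n → ℝ) (hu : ∀ i, 0 < u i) (hv : ∀ i, 0 < v i)
    (P : Matrix (Fin n) (Fin n) ℝ)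
    (hP : P = Matrix.diagonal u * K * Matrix.diagonal v)
    (hrow : P.mulVec 1 = a) (hcol : P.transpose.mulVec 1 = b) :
    (∀ Q : Matrix (Fin n) (Fin n) ℝ,
        (∀ i j, 0 < Q i j) → Q.mulVec 1 = a → Q.transpose.mulVec 1 = b →
          f P ≤ f Q ∧ (f Q = f P → Q = P)) := by
  -- entrywise formula for P
  have hPentry : ∀ i j, P i j = u i * K i j * v j := by
    intro i j
    rw [hP]
    simp [Matrix.mul_apply, Matrix.diagonal, Finset.sum_mul]
  have hPpos : ∀ i j, 0 < P i j := by
    intro i j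
    rw [hPentry, hK]
    have h1 := hu i
    have h2 := hv j
    have := Real.exp_pos (-(C i j) / ε)
    positivity
  -- cost in terms of P, u, v
  have hC : ∀ i j, C i j = ε * (Real.log (u i) + Real.log (v j) - Real.log (P i j)) := by
    intro i j
    have hKpos : 0 < K i j := by rw [hK]; exact Real.exp_pos _
    have hlogP : Real.log (P i j)
        = Real.log (u i) + Real.log (K i j) + Real.log (v j) := by
      rw [hPentry]
      have h1 := hu i
      rw [Real.log_mul (by positivity) (hv j).ne',
          Real.log_mul (hu i).ne' hKpos.ne']
    have hlogK : Real.log (K i j) = -(C i j) / ε := by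
      rw [hK, Real.log_exp]
    rw [hlogP, hlogK]
    field_simp
    ring
  -- marginals as plain sums
  have marg_row : ∀ (Q : Matrix (Fin n) (Fin n) ℝ), Q.mulVec 1 = a →
      ∀ i, ∑ j, Q i j = a i := by
    intro Q h i
    have := congrFun h i
    simpa [Matrix.mulVec, dotProduct] using this
  have marg_col : ∀ (Q : Matrix (Fin n) (Fin n) ℝ), Q.transpose.mulVec 1 = b →
      ∀ j, ∑ i, Q i j = b j := by
    intro Q h j
    have := congrFun h j
    simpa [Matrix.mulVec, dotProduct, Matrix.transpose] using this
  have hProw := marg_row P hrow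
  have hPcol := marg_col P hcol
  -- representation of f on the polytope
  have hrep : ∀ Q : Matrix (Fin n) (Fin n) ℝ,
      (∀ i, ∑ j, Q i j = a i) → (∀ j, ∑ i, Q i j = b j) →
      f Q = ε * (∑ i, a i * Real.log (u i)) + ε * (∑ j, b j * Real.log (v j))
        + ε * ∑ i, ∑ j, (Q i j * (Real.log (Q i j) - Real.log (P i j)) - Q i j) := by
    intro Q hQr hQc
    have step1 : f Q = ∑ i, ∑ j,
        (Q i j * C i j + ε * (Q i j * (Real.log (Q i j) - 1))) := by
      rw [hf, Finset.mul_sum]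
      simp_rw [Finset.mul_sum]
      rw [← Finset.sum_add_distrib]
      refine Finset.sum_congr rfl fun i _ => ?_
      rw [← Finset.sum_add_distrib]
    have step2 : ∀ i j,
        Q i j * C i j + ε * (Q i j * (Real.log (Q i j) - 1))
        = ε * (Q i j * Real.log (u i)) + ε * (Q i j * Real.log (v j))
          + ε * (Q i j * (Real.log (Q i j) - Real.log (P i j)) - Q i j) := by
      intro i j
      rw [hC i j]
      ring
    rw [step1]
    have step3 : ∑ i, ∑ j,
        (ε * (Q i j * Real.log (u i)) + ε * (Q i j * Real.log (v j))
          + ε * (Q i j * (Real.log (Q i j) - Real.log (P i j)) - Q i j))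
        = (∑ i, ∑ j, ε * (Q i j * Real.log (u i)))
          + (∑ i, ∑ j, ε * (Q i j * Real.log (v j)))
          + (∑ i, ∑ j, ε * (Q i j * (Real.log (Q i j) - Real.log (P i j)) - Q i j)) := by
      simp [Finset.sum_add_distrib]
    have hA : (∑ i, ∑ j, ε * (Q i j * Real.log (u i)))
        = ε * (∑ i, a i * Real.log (u i)) := by
      rw [Finset.mul_sum]
      refine Finset.sum_congr rfl fun i _ => ?_
      rw [← Finset.mul_sum, ← Finset.sum_mul, hQr i]
    have hB : (∑ i, ∑ j, ε * (Q i j * Real.log (v j)))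
        = ε * (∑ j, b j * Real.log (v j)) := by
      rw [Finset.sum_comm, Finset.mul_sum]
      refine Finset.sum_congr rfl fun j _ => ?_
      rw [← Finset.mul_sum, ← Finset.sum_mul, hQc j]
    have hE : (∑ i, ∑ j, ε * (Q i j * (Real.log (Q i j) - Real.log (P i j)) - Q i j))
        = ε * ∑ i, ∑ j, (Q i j * (Real.log (Q i j) - Real.log (P i j)) - Q i j) := by
      rw [Finset.mul_sum]
      refine Finset.sum_congr rfl fun i _ => ?_
      rw [Finset.mul_sum]
    calc ∑ i, ∑ j, (Q i j * C i j + ε * (Q i j * (Real.log (Q i j) - 1)))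
        = ∑ i, ∑ j, (ε * (Q i j * Real.log (u i)) + ε * (Q i j * Real.log (v j))
          + ε * (Q i j * (Real.log (Q i j) - Real.log (P i j)) - Q i j)) :=
          Finset.sum_congr rfl fun i _ => Finset.sum_congr rfl fun j _ => step2 i j
      _ = _ := by rw [step3, hA, hB, hE]
  intro Q hQpos hQrow' hQcol'
  have hQr := marg_row Q hQrow'
  have hQc := marg_col Q hQcol'
  -- the discrepancy D
  set D : ℝ := ∑ i, ∑ j,
      (Q i j * (Real.log (Q i j) - Real.log (P i j)) - Q i j + P i j) with hDdef
  have hdiff : f Q = f P + ε * D := by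
    rw [hrep Q hQr hQc, hrep P hProw hPcol]
    have hsub : D = (∑ i, ∑ j, (Q i j * (Real.log (Q i j) - Real.log (P i j)) - Q i j))
        - (∑ i, ∑ j, (P i j * (Real.log (P i j) - Real.log (P i j)) - P i j)) := by
      rw [hDdef, ← Finset.sum_sub_distrib]
      refine Finset.sum_congr rfl fun i _ => ?_
      rw [← Finset.sum_sub_distrib]
      refine Finset.sum_congr rfl fun j _ => ?_
      ring
    rw [hsub]
    ring
  have hterm_nonneg : ∀ i ∈ Finset.univ, ∀ j ∈ (Finset.univ : Finset (Fin n)),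
      0 ≤ Q i j * (Real.log (Q i j) - Real.log (P i j)) - Q i j + P i j :=
    fun i _ j _ => sinkhorn_key_nonneg (hPpos i j) (hQpos i j)
  have hDnn : 0 ≤ D :=
    Finset.sum_nonneg fun i hi => Finset.sum_nonneg (hterm_nonneg i hi)
  constructor
  · rw [hdiff]
    nlinarith
  · intro heq
    rw [hdiff] at heq
    have hD0 : D = 0 := by
      have : ε * D = 0 := by linarith
      exact (mul_eq_zero.mp this).resolve_left hε.ne'
    have hinner : ∀ i ∈ (Finset.univ : Finset (Fin n)),
        (∑ j, (Q i j * (Real.log (Q i j) - Real.log (P i j)) - Q i j + P i j)) = 0 := by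
      rw [← Finset.sum_eq_zero_iff_of_nonneg
        (fun i hi => Finset.sum_nonneg (hterm_nonneg i hi))]
      exact hD0
    ext i j
    have hterm0 : Q i j * (Real.log (Q i j) - Real.log (P i j)) - Q i j + P i j = 0 := by
      have := (Finset.sum_eq_zero_iff_of_nonneg (hterm_nonneg i (Finset.mem_univ i))).mp
        (hinner i (Finset.mem_univ i)) j (Finset.mem_univ j)
      exact this
    exact sinkhorn_key_eq (hPpos i j) (hQpos i j) hterm0
end

section
/- The optimal value of the entropy-regularized OT problem converges to the optimal value of the unregularized linear OT problem as ε → 0⁺: for each ε > 0 let V(ε) = min over U(a,b) of ⟨P,C⟩ + ε Σ P_{ij}(log P_{ij} − 1); then V(ε) → min_{P ∈ U(a,b)} ⟨P,C⟩ as ε → 0⁺. -/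
lemma ent_lb {x : ℝ} (h0 : 0 ≤ x) : -1 ≤ x * (Real.log x - 1) := by
  rcases eq_or_lt_of_le h0 with h | h
  · simp [← h]
  · have hlog : 1 - x⁻¹ ≤ Real.log x := by
      have := Real.log_le_sub_one_of_pos (inv_pos.mpr h)
      rw [Real.log_inv] at this
      linarith
    have h1 : x * (1 - x⁻¹) ≤ x * Real.log x :=
      mul_le_mul_of_nonneg_left hlog h0
    have hx : x * (1 - x⁻¹) = x - 1 := by field_simp
    have expand : x * (Real.log x - 1) = x * Real.log x - x := by ring
    linarith

lemma ent_ub {x : ℝ} (h0 : 0 ≤ x) (h1 : x ≤ 1) : x * (Real.log x - 1) ≤ 0 := by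
  have : Real.log x ≤ 0 := Real.log_nonpos h0 h1
  nlinarith

/-- The optimal value of the entropy-regularized OT problem converges to the optimal
value of the unregularized linear OT problem as `ε → 0⁺`. -/
theorem entropic_ot_value_tendsto_linear_value
    (n : ℕ) (hn : 0 < n)
    (a b : Fin n → ℝ) (ha : ∀ i, 0 < a i) (hb : ∀ i, 0 < b i)
    (hsa : ∑ i, a i = 1) (hsb : ∑ i, b i = 1)
    (C : Matrix (Fin n) (Fin n) ℝ)
    (U : Set (Matrix (Fin n) (Fin n) ℝ))
    (hU : U = {P | (∀ i j, 0 ≤ P i j) ∧ P.mulVec 1 = a ∧ P.transpose.mulVec 1 = b})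
    (V : ℝ → ℝ)
    (hV : ∀ ε > (0:ℝ), IsLeast
      {y | ∃ P ∈ U, y = (∑ i, ∑ j, P i j * C i j)
          + ε * ∑ i, ∑ j, P i j * (Real.log (P i j) - 1)} (V ε))
    (L : ℝ)
    (hL : IsLeast {y | ∃ P ∈ U, y = ∑ i, ∑ j, P i j * C i j} L) :
    Filter.Tendsto V (nhdsWithin 0 (Set.Ioi 0)) (nhds L) := by
  set K : ℝ := (n : ℝ) * n with hK
  -- entries of any P ∈ U lie in [0,1]
  have entry_mem : ∀ P ∈ U, ∀ i j, 0 ≤ P i j ∧ P i j ≤ 1 := by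
    intro P hP i j
    rw [hU] at hP
    obtain ⟨hpos, hrow, _⟩ := hP
    refine ⟨hpos i j, ?_⟩
    have hrowi : ∑ k, P i k = a i := by
      have := congrFun hrow i
      simpa [Matrix.mulVec, dotProduct] using this
    have h1 : P i j ≤ ∑ k, P i k :=
      Finset.single_le_sum (fun k _ => hpos i k) (Finset.mem_univ j)
    have h2 : a i ≤ ∑ k, a k :=
      Finset.single_le_sum (fun k _ => (ha k).le) (Finset.mem_univ i)
    rw [hsa] at h2
    linarith [hrowi ▸ h1]
  -- entropy bounds
  have ent_bounds : ∀ P ∈ U,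
      -K ≤ ∑ i, ∑ j, P i j * (Real.log (P i j) - 1) ∧
      (∑ i, ∑ j, P i j * (Real.log (P i j) - 1)) ≤ 0 := by
    intro P hP
    constructor
    · have : ∀ i : Fin n, -(n : ℝ) ≤ ∑ j, P i j * (Real.log (P i j) - 1) := by
        intro i
        calc -(n : ℝ) = ∑ _j : Fin n, (-1 : ℝ) := by simp
        _ ≤ _ := Finset.sum_le_sum (fun j _ => ent_lb (entry_mem P hP i j).1)
      calc -K = ∑ _i : Fin n, (-(n:ℝ)) := by simp [hK]
      _ ≤ _ := Finset.sum_le_sum (fun i _ => this i)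
    · refine Finset.sum_nonpos fun i _ => Finset.sum_nonpos fun j _ => ?_
      exact ent_ub (entry_mem P hP i j).1 (entry_mem P hP i j).2
  obtain ⟨P₀, hP₀U, hP₀L⟩ := hL.1
  -- bounds on V ε
  have hbounds : ∀ ε ∈ Set.Ioi (0:ℝ), L - ε * K ≤ V ε ∧ V ε ≤ L := by
    intro ε hε
    have hε' : 0 < ε := hε
    obtain ⟨hmem, hlb⟩ := hV ε hε'
    constructor
    · obtain ⟨P, hPU, hPeq⟩ := hmem
      have h1 : L ≤ ∑ i, ∑ j, P i j * C i j := hL.2 ⟨P, hPU, rfl⟩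
      have h2 := (ent_bounds P hPU).1
      have h3 : ε * (-K) ≤ ε * ∑ i, ∑ j, P i j * (Real.log (P i j) - 1) :=
        mul_le_mul_of_nonneg_left h2 hε'.le
      rw [hPeq]; nlinarith
    · have hmem0 : (∑ i, ∑ j, P₀ i j * C i j)
          + ε * ∑ i, ∑ j, P₀ i j * (Real.log (P₀ i j) - 1) ∈
          {y | ∃ P ∈ U, y = (∑ i, ∑ j, P i j * C i j)
            + ε * ∑ i, ∑ j, P i j * (Real.log (P i j) - 1)} := ⟨P₀, hP₀U, rfl⟩
      have h4 := hlb hmem0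
      have h5 : ε * ∑ i, ∑ j, P₀ i j * (Real.log (P₀ i j) - 1) ≤ 0 :=
        mul_nonpos_of_nonneg_of_nonpos hε'.le (ent_bounds P₀ hP₀U).2
      calc V ε ≤ _ := h4
      _ ≤ ∑ i, ∑ j, P₀ i j * C i j := by linarith
      _ = L := hP₀L.symm
  -- squeeze
  have hlo : Filter.Tendsto (fun ε : ℝ => L - ε * K)
      (nhdsWithin 0 (Set.Ioi 0)) (nhds L) := by
    have : Filter.Tendsto (fun ε : ℝ => L - ε * K) (nhds 0) (nhds (L - 0 * K)) :=
      Filter.Tendsto.sub tendsto_const_nhds (Filter.Tendsto.mul_const K Filter.tendsto_id)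
    simpa using this.mono_left nhdsWithin_le_nhds
  refine tendsto_of_tendsto_of_tendsto_of_le_of_le' hlo tendsto_const_nhds ?_ ?_
  · exact eventually_nhdsWithin_of_forall (fun ε hε => (hbounds ε hε).1)
  · exact eventually_nhdsWithin_of_forall (fun ε hε => (hbounds ε hε).2)
end
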